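/- arXiv:1312.4135 — 2 statements merged into one kernel-verified Lean document; each statement's English description precedes it below -/
import Mathlib

section
/- Let H be a hypergraph on [n] and x an optimal weighting for λ'(H) with positive coordinates exactly x_1,...,x_k, where additionally the number of positive coordinates k is minimal among all optimal weightings. Then for every pair 1 ≤ i < j ≤ k, there exists an edge e of H with {i,j} ⊆ e. -/
/-! If no edge contains both `a` and `b`, every monomial of `λ'` involves at most one of `x a`,
`x b`, so `λ'` is affine along `e_a - e_b`. Being maximal at `x`, an interior point of the segment
of the simplex in that direction, it is constant on the segment; sliding all the weight of `b`
onto `a` then gives an optimal weighting with smaller support. -/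

open Finset

variable {ι : Type*}

/-- The paper's `λ'(H, x)` for the hypergraph with edge set `E`. -/
def lagrangian (E : Finset (Finset ι)) (x : ι → ℝ) : ℝ :=
  ∑ e ∈ E, (e.card.factorial : ℝ) * ∏ m ∈ e, x m

section DecidableEq

variable [DecidableEq ι]

lemma exists_prod_add_smul_eq {e : Finset ι} (x v : ι → ℝ) {a : ι}
    (hv : ∀ m ∈ e, m ≠ a → v m = 0) :
    ∃ c, ∀ t : ℝ, ∏ m ∈ e, (x + t • v) m = ∏ m ∈ e, x m + t * c := by
  by_cases ha : a ∈ e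
  · refine ⟨v a * ∏ m ∈ e.erase a, x m, fun t => ?_⟩
    have hrest : ∏ m ∈ e.erase a, (x + t • v) m = ∏ m ∈ e.erase a, x m :=
      prod_congr rfl fun m hm => by simp [hv m (mem_of_mem_erase hm) (ne_of_mem_erase hm)]
    rw [← mul_prod_erase e _ ha, hrest, ← mul_prod_erase e x ha, Pi.add_apply, Pi.smul_apply,
      smul_eq_mul]
    ring
  · refine ⟨0, fun t => ?_⟩
    rw [mul_zero, add_zero]
    exact prod_congr rfl fun m hm => by simp [hv m hm (ne_of_mem_of_not_mem hm ha)]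

lemma exists_lagrangian_add_smul_eq (E : Finset (Finset ι)) (x v : ι → ℝ)
    (hv : ∀ e ∈ E, ∃ a, ∀ m ∈ e, m ≠ a → v m = 0) :
    ∃ c, ∀ t : ℝ, lagrangian E (x + t • v) = lagrangian E x + t * c := by
  choose! c hc using fun e he => (hv e he).elim fun _ ha => exists_prod_add_smul_eq x v ha
  refine ⟨∑ e ∈ E, (e.card.factorial : ℝ) * c e, fun t => ?_⟩
  simp only [lagrangian, mul_sum, ← sum_add_distrib]
  refine sum_congr rfl fun e he => ?_
  rw [hc e he t]
  ring

lemma exists_single_sub_single_eq_zero_of_not_both_mem {e : Finset ι} {a b : ι}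
    (h : ¬(a ∈ e ∧ b ∈ e)) :
    ∃ c, ∀ m ∈ e, m ≠ c → (Pi.single a 1 - Pi.single b 1 : ι → ℝ) m = 0 := by
  by_cases ha : a ∈ e
  · refine ⟨a, fun m hm hma => ?_⟩
    have hmb : m ≠ b := by rintro rfl; exact h ⟨ha, hm⟩
    simp [hma, hmb]
  · refine ⟨b, fun m hm hmb => ?_⟩
    have hma : m ≠ a := ne_of_mem_of_not_mem hm ha
    simp [hma, hmb]

lemma add_smul_single_sub_single_nonneg {x : ι → ℝ} (hx : ∀ m, 0 ≤ x m) {a b : ι} (hab : a ≠ b)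
    {t : ℝ} (hta : -x a ≤ t) (htb : t ≤ x b) (m : ι) :
    0 ≤ (x + t • (Pi.single a 1 - Pi.single b 1) : ι → ℝ) m := by
  simp only [Pi.add_apply, Pi.smul_apply, Pi.sub_apply, Pi.single_apply, smul_eq_mul]
  split_ifs with hma hmb hmb
  · exact absurd (hma.symm.trans hmb) hab
  all_goals subst_vars; linarith [hx m]

lemma filter_pos_add_smul_single_sub_single_ssubset [Fintype ι] {x : ι → ℝ} {a b : ι}
    (ha : 0 < x a) (hb : 0 < x b) (hab : a ≠ b) :
    univ.filter (fun m => 0 < (x + x b • (Pi.single a 1 - Pi.single b 1) : ι → ℝ) m) ⊂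
      univ.filter (fun m => 0 < x m) := by
  refine ssubset_iff_of_subset (fun m => ?_) |>.2 ⟨b, by simp [hb], by simp [hab.symm]⟩
  rcases eq_or_ne m a with rfl | hma
  · simp [ha]
  rcases eq_or_ne m b with rfl | hmb
  · simp [hma]
  simp [hma, hmb]

lemma sum_add_smul_single_sub_single [Fintype ι] (x : ι → ℝ) (a b : ι) (t : ℝ) :
    ∑ m, (x + t • (Pi.single a 1 - Pi.single b 1) : ι → ℝ) m = ∑ m, x m := by
  simp [sum_add_distrib, mul_sub, sum_sub_distrib, ← mul_sum]

theorem exists_mem_mem_of_minimal_support [Fintype ι] (E : Finset (Finset ι))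
    {x : ι → ℝ} (hx0 : ∀ i, 0 ≤ x i) (hx1 : ∑ i, x i = 1)
    (hopt : ∀ y : ι → ℝ, (∀ i, 0 ≤ y i) → ∑ i, y i = 1 → lagrangian E y ≤ lagrangian E x)
    (hmin : ∀ y : ι → ℝ, (∀ i, 0 ≤ y i) → ∑ i, y i = 1 → lagrangian E y = lagrangian E x →
      (univ.filter (fun i => 0 < x i)).card ≤ (univ.filter (fun i => 0 < y i)).card)
    {a b : ι} (ha : 0 < x a) (hb : 0 < x b) (hab : a ≠ b) :
    ∃ e ∈ E, a ∈ e ∧ b ∈ e := by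
  by_contra! hcov
  set v : ι → ℝ := Pi.single a 1 - Pi.single b 1
  obtain ⟨c, hc⟩ := exists_lagrangian_add_smul_eq E x v fun e he =>
    exists_single_sub_single_eq_zero_of_not_both_mem fun h => hcov e he h.1 h.2
  have hfeas (t : ℝ) (hta : -x a ≤ t) (htb : t ≤ x b) :
      (∀ i, 0 ≤ (x + t • v) i) ∧ ∑ i, (x + t • v) i = 1 :=
    ⟨add_smul_single_sub_single_nonneg hx0 hab hta htb,
      (sum_add_smul_single_sub_single x a b t).trans hx1⟩
  obtain ⟨hy0, hy1⟩ := hfeas (x b) (by linarith) le_rfl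
  obtain ⟨hz0, hz1⟩ := hfeas (-x a) le_rfl (by linarith)
  have hc0 : c = 0 := by
    have hy := hc (x b) ▸ hopt _ hy0 hy1
    have hz := hc (-x a) ▸ hopt _ hz0 hz1
    nlinarith
  have hcard := hmin _ hy0 hy1 (by rw [hc, hc0, mul_zero, add_zero])
  exact (card_lt_card (filter_pos_add_smul_single_sub_single_ssubset ha hb hab)).not_ge hcard

end DecidableEq

theorem optimal_weighting_pairs_covered_general (n k : ℕ)
    (E : Finset (Finset (Fin n)))
    (x : Fin n → ℝ) (hx0 : ∀ i, 0 ≤ x i) (hx1 : (∑ i, x i) = 1)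
    (hopt : ∀ y : Fin n → ℝ, (∀ i, 0 ≤ y i) → (∑ i, y i) = 1 →
      (∑ e ∈ E, (Nat.factorial e.card) * ∏ m ∈ e, y m) ≤
        ∑ e ∈ E, (Nat.factorial e.card) * ∏ m ∈ e, x m)
    (hsupp : ∀ i : Fin n, 0 < x i ↔ (i : ℕ) < k)
    (hmin : ∀ y : Fin n → ℝ, (∀ i, 0 ≤ y i) → (∑ i, y i) = 1 →
      (∑ e ∈ E, (Nat.factorial e.card) * ∏ m ∈ e, y m) =
        (∑ e ∈ E, (Nat.factorial e.card) * ∏ m ∈ e, x m) →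
      (univ.filter (fun i => 0 < x i)).card ≤ (univ.filter (fun i => 0 < y i)).card) :
    ∀ i j : Fin n, (i : ℕ) < k → (j : ℕ) < k → i ≠ j → ∃ e ∈ E, i ∈ e ∧ j ∈ e :=
  fun i j hi hj hij =>
    exists_mem_mem_of_minimal_support E hx0 hx1 hopt hmin ((hsupp i).2 hi) ((hsupp j).2 hj) hij

/-- Lemma 2: if `x` is an optimal weighting for `λ'(H)` with positive coordinates exactly
`x_1, …, x_k`, and the number of positive coordinates is minimal among all optimal
weightings, then every pair of support vertices is covered by some edge of `H`. -/
theorem optimal_weighting_pairs_covered (n k : ℕ)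
    (E : Finset (Finset (Fin n))) (hE : ∀ e ∈ E, e.Nonempty)
    (x : Fin n → ℝ) (hx0 : ∀ i, 0 ≤ x i) (hx1 : (∑ i, x i) = 1)
    (hopt : ∀ y : Fin n → ℝ, (∀ i, 0 ≤ y i) → (∑ i, y i) = 1 →
      (∑ e ∈ E, (Nat.factorial e.card) * ∏ m ∈ e, y m) ≤
        ∑ e ∈ E, (Nat.factorial e.card) * ∏ m ∈ e, x m)
    (hsupp : ∀ i : Fin n, 0 < x i ↔ (i : ℕ) < k)
    (hmin : ∀ y : Fin n → ℝ, (∀ i, 0 ≤ y i) → (∑ i, y i) = 1 →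
      (∑ e ∈ E, (Nat.factorial e.card) * ∏ m ∈ e, y m) =
        (∑ e ∈ E, (Nat.factorial e.card) * ∏ m ∈ e, x m) →
      (univ.filter (fun i => 0 < x i)).card ≤ (univ.filter (fun i => 0 < y i)).card) :
    ∀ i j : Fin n, (i : ℕ) < k → (j : ℕ) < k → i ≠ j → ∃ e ∈ E, i ∈ e ∧ j ∈ e :=
  optimal_weighting_pairs_covered_general n k E x hx0 hx1 hopt hsupp hmin
end

section
/- Let H be a {1,2}-graph on [n] and x an optimal weighting with positive coordinates x_1,...,x_k such that every pair 1 ≤ i < j ≤ k is an edge of H^2. If {i} ∈ H^1 but {j} ∉ H^1 for some 1 ≤ i, j ≤ k, then x_i - x_j = 1/2. -/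
/-!
Moving mass `t` from `i` to `j` keeps `x` on the simplex for `-x j ≤ t ≤ x i`, and changes the
objective by `(2 (x i - x j) - 1) t - 2 t²`: the singleton `{i}` loses `t`, the edge `{i, j}`
contributes the quadratic term, and the other edges through `i` and through `j` contribute
opposite linear terms, since by completeness of the support both vertices see the same weight
`1 - x i - x j` of their neighbours. As both coordinates are positive, `t = 0` is an interior
maximum of this quadratic, so its linear coefficient vanishes.
-/

open Finset Filter Topology

theorem eq_zero_of_eventually_mul_le_mul_sq {a b : ℝ}
    (h : ∀ᶠ t in 𝓝 0, a * t ≤ b * t ^ 2) : a = 0 := by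
  have hmax : IsLocalMax (fun t => a * t - b * t ^ 2) 0 :=
    h.mono fun t ht => by simpa using ht
  have hderiv : HasDerivAt (fun t => a * t - b * t ^ 2) a 0 := by
    have := ((hasDerivAt_id (0 : ℝ)).const_mul a).fun_sub ((hasDerivAt_pow 2 (0 : ℝ)).const_mul b)
    simpa using this
  exact hmax.hasDerivAt_eq_zero hderiv

section LinkSum

variable {α R : Type*} [DecidableEq α] {E2 : Finset (Finset α)} {i j : α}

-- The partial derivative at `i` of `∑ e ∈ E2, ∏ m ∈ e, x m`, restricted to edges avoiding `j`.
def linkSum [CommSemiring R] (E2 : Finset (Finset α)) (x : α → R) (i j : α) : R :=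
  ∑ e ∈ E2 with i ∈ e ∧ j ∉ e, ∏ m ∈ e.erase i, x m

theorem eq_pair_of_card_eq_two {e : Finset α} (he : e.card = 2) (hij : i ≠ j) (hi : i ∈ e)
    (hj : j ∈ e) : e = {i, j} :=
  (eq_of_subset_of_card_le (by simp [insert_subset_iff, hi, hj])
    (by rw [he, card_pair hij])).symm

theorem sum_prod_eq_of_pair_mem [CommSemiring R] (hE2 : ∀ e ∈ E2, e.card = 2) (hij : i ≠ j)
    (hmem : {i, j} ∈ E2) (x : α → R) :
    ∑ e ∈ E2, ∏ m ∈ e, x m = x i * x j + x i * linkSum E2 x i j + x j * linkSum E2 x j i +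
      ∑ e ∈ E2 with i ∉ e ∧ j ∉ e, ∏ m ∈ e, x m := by
  have hboth : E2.filter (fun e => i ∈ e ∧ j ∈ e) = {{i, j}} := by
    ext e
    simp only [mem_filter, mem_singleton]
    constructor
    · rintro ⟨he, hi, hj⟩
      exact eq_pair_of_card_eq_two (hE2 e he) hij hi hj
    · rintro rfl
      simp [hmem]
  have hlink (a b : α) : x a * linkSum E2 x a b = ∑ e ∈ E2 with a ∈ e ∧ b ∉ e, ∏ m ∈ e, x m := by
    rw [linkSum, mul_sum]
    exact sum_congr rfl fun e he => mul_prod_erase e x (mem_filter.1 he).2.1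
  rw [hlink, hlink, ← sum_filter_add_sum_filter_not E2 (i ∈ ·),
    ← sum_filter_add_sum_filter_not (E2.filter (i ∈ ·)) (j ∈ ·),
    ← sum_filter_add_sum_filter_not (E2.filter (i ∉ ·)) (j ∈ ·)]
  simp only [filter_filter]
  rw [hboth, sum_singleton, prod_pair hij]
  have hswap : E2.filter (fun e => i ∉ e ∧ j ∈ e) = E2.filter (fun e => j ∈ e ∧ i ∉ e) :=
    filter_congr fun _ _ => and_comm
  rw [hswap]
  ring

theorem linkSum_eq_sum_of_pair_mem [Fintype α] [CommSemiring R] (hE2 : ∀ e ∈ E2, e.card = 2)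
    (hij : i ≠ j) {x : α → R} (hpair : ∀ m, m ≠ i → x m ≠ 0 → {i, m} ∈ E2) :
    linkSum E2 x i j = ∑ m with m ≠ i ∧ m ≠ j, x m := by
  rw [← sum_filter_of_ne (p := fun m => {i, m} ∈ E2)
    fun m hm hxm => hpair m (mem_filter.1 hm).2.1 hxm, filter_filter, linkSum]
  symm
  refine sum_bij (fun m _ => {i, m}) ?_ ?_ ?_ ?_
  · intro m hm
    simp only [mem_filter, mem_univ, true_and] at hm ⊢
    exact ⟨hm.2, by simp, by simp [Ne.symm hij, Ne.symm hm.1.2]⟩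
  · intro a ha b hb hab
    simp only [mem_filter, mem_univ, true_and] at ha
    have : a ∈ ({i, b} : Finset α) := hab ▸ mem_insert_of_mem (mem_singleton_self a)
    simpa [ha.1.1] using this
  · intro e he
    simp only [mem_filter, mem_univ, true_and] at he ⊢
    obtain ⟨he, hi, hj⟩ := he
    obtain ⟨a, b, hab, rfl⟩ := card_eq_two.1 (hE2 e he)
    rcases mem_insert.1 hi with rfl | hi
    · exact ⟨b, ⟨⟨hab.symm, fun h => hj (by simp [h])⟩, he⟩, rfl⟩
    · obtain rfl := mem_singleton.1 hi
      exact ⟨a, ⟨⟨hab, fun h => hj (by simp [h])⟩, pair_comm a i ▸ he⟩, pair_comm i a⟩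
  · intro m hm
    simp only [mem_filter, mem_univ, true_and] at hm
    rw [erase_insert (by simpa using hm.1.1.symm), prod_singleton]

theorem linkSum_congr [CommSemiring R] {x y : α → R} (h : ∀ m, m ≠ i → m ≠ j → y m = x m) :
    linkSum E2 y i j = linkSum E2 x i j := by
  refine sum_congr rfl fun e he => prod_congr rfl fun m hm => h m (ne_of_mem_erase hm) ?_
  rintro rfl
  exact (mem_filter.1 he).2.2 (mem_of_mem_erase hm)

theorem sum_prod_add_single_sub_single [CommRing R] (hE2 : ∀ e ∈ E2, e.card = 2) (hij : i ≠ j)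
    (hmem : {i, j} ∈ E2) (x : α → R) (t : R) :
    ∑ e ∈ E2, ∏ m ∈ e, (x + Pi.single j t - Pi.single i t : α → R) m =
      ∑ e ∈ E2, ∏ m ∈ e, x m + t * (x i - x j) - t ^ 2 +
        t * (linkSum E2 x j i - linkSum E2 x i j) := by
  set y : α → R := x + Pi.single j t - Pi.single i t
  have hy (m : α) (hi : m ≠ i) (hj : m ≠ j) : y m = x m := by simp [y, hi, hj]
  have hrest : ∑ e ∈ E2 with i ∉ e ∧ j ∉ e, ∏ m ∈ e, y m =
      ∑ e ∈ E2 with i ∉ e ∧ j ∉ e, ∏ m ∈ e, x m := by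
    refine sum_congr rfl fun e he => prod_congr rfl fun m hm => hy m ?_ ?_
    · rintro rfl; exact (mem_filter.1 he).2.1 hm
    · rintro rfl; exact (mem_filter.1 he).2.2 hm
  rw [sum_prod_eq_of_pair_mem hE2 hij hmem y, sum_prod_eq_of_pair_mem hE2 hij hmem x, hrest,
    linkSum_congr hy, linkSum_congr fun m hj hi => hy m hi hj]
  simp only [y, Pi.add_apply, Pi.sub_apply, Pi.single_eq_same, Pi.single_eq_of_ne hij,
    Pi.single_eq_of_ne hij.symm]
  ring

end LinkSum

/-- Claim 1: for a `{1,2}`-graph `H` with optimal weighting `x` supported on `{1,…,k}`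
such that every pair of support vertices is an edge of `H²`, if `{i} ∈ H¹` and
`{j} ∉ H¹` for support vertices `i, j`, then `x_i - x_j = 1/2`. -/
theorem singleton_weight_gap (n k : ℕ)
    (E1 : Finset (Fin n)) (E2 : Finset (Finset (Fin n))) (hE2 : ∀ e ∈ E2, e.card = 2)
    (x : Fin n → ℝ) (hx0 : ∀ i, 0 ≤ x i) (hx1 : (∑ i, x i) = 1)
    (hopt : ∀ y : Fin n → ℝ, (∀ i, 0 ≤ y i) → (∑ i, y i) = 1 →
      ((∑ i ∈ E1, y i) + 2 * ∑ e ∈ E2, ∏ m ∈ e, y m) ≤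
        (∑ i ∈ E1, x i) + 2 * ∑ e ∈ E2, ∏ m ∈ e, x m)
    (hsupp : ∀ i : Fin n, 0 < x i ↔ (i : ℕ) < k)
    (hpairs : ∀ i j : Fin n, (i : ℕ) < k → (j : ℕ) < k → i ≠ j →
      ({i, j} : Finset (Fin n)) ∈ E2) :
    ∀ i j : Fin n, (i : ℕ) < k → (j : ℕ) < k → i ∈ E1 → j ∉ E1 →
      x i - x j = 1 / 2 := by
  intro i j hik hjk hiE1 hjE1
  have hij : i ≠ j := by rintro rfl; exact hjE1 hiE1
  have hlink (a b : Fin n) (ha : (a : ℕ) < k) (hab : a ≠ b) :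
      linkSum E2 x a b = ∑ m with m ≠ a ∧ m ≠ b, x m :=
    linkSum_eq_sum_of_pair_mem hE2 hab fun m hma hm =>
      hpairs a m ha ((hsupp m).1 ((hx0 m).lt_of_ne' hm)) hma.symm
  have hlink_symm : linkSum E2 x j i = linkSum E2 x i j := by
    rw [hlink j i hjk hij.symm, hlink i j hik hij]
    exact sum_congr (filter_congr fun _ _ => and_comm) fun _ _ => rfl
  have hgain : ∀ t ∈ Set.Icc (-x j) (x i), (2 * (x i - x j) - 1) * t ≤ 2 * t ^ 2 := by
    intro t ⟨htj, hti⟩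
    set y : Fin n → ℝ := x + Pi.single j t - Pi.single i t
    have hy0 : ∀ m, 0 ≤ y m := by
      intro m
      by_cases hmi : m = i
      · subst hmi; simp [y, hij, hti]
      · by_cases hmj : m = j
        · subst hmj; simpa [y, hmi] using neg_le_iff_add_nonneg'.1 htj
        · simp [y, hmi, hmj, hx0 m]
    have hy1 : ∑ m, y m = 1 := by simp [y, sum_add_distrib, sum_sub_distrib, sum_pi_single', hx1]
    have hyE1 : ∑ m ∈ E1, y m = ∑ m ∈ E1, x m - t := by
      simp [y, sum_add_distrib, sum_sub_distrib, sum_pi_single', hiE1, hjE1]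
    have hle := hopt y hy0 hy1
    rw [hyE1, sum_prod_add_single_sub_single hE2 hij (hpairs i j hik hjk hij), hlink_symm] at hle
    linarith
  have hzero := eq_zero_of_eventually_mul_le_mul_sq
    (mem_of_superset (Icc_mem_nhds (neg_lt_zero.2 ((hsupp j).2 hjk)) ((hsupp i).2 hik)) hgain)
  linarith
end
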